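/- arXiv:0707.2008 — 4 statements merged into one kernel-verified Lean document; each statement's English description precedes it below -/
import Mathlib

section
/- Let H be a real Hilbert space, let C be a family of closed subspaces of H containing the zero subspace that has the Minimal Approximation Property, let F = (f_1, …, f_m) be a finite family of vectors in H, and let l ≥ 1. If (c_0, V_0) is a Γ-minimal pair (in particular V_0 is a best bundle for the labeling c_0), then e(F, V_0) = Γ(c_0, V_0). -/
open Metric Finset

/-- `E(F, V)`. -/
noncomputable def totalErr {H : Type*} [NormedAddCommGroup H] [InnerProductSpace ℝ H]
    {m : ℕ} (F : Fin m → H) (V : Submodule ℝ H) : ℝ :=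
  ∑ i, Metric.infDist (F i) (V : Set H) ^ 2

def HasMAP {H : Type*} [NormedAddCommGroup H] [InnerProductSpace ℝ H]
    (C : Set (Submodule ℝ H)) : Prop :=
  ∀ (m : ℕ) (F : Fin m → H), ∃ V0 ∈ C, ∀ V ∈ C, totalErr F V0 ≤ totalErr F V

/-- `e(F, V)`. -/
noncomputable def eBundle {H : Type*} [NormedAddCommGroup H] [InnerProductSpace ℝ H]
    {m l : ℕ} (F : Fin m → H) (V : Fin l → Submodule ℝ H) : ℝ :=
  ∑ i, ⨅ j, Metric.infDist (F i) (V j : Set H) ^ 2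

/-- `Γ(c, V)`. -/
noncomputable def Gamma {H : Type*} [NormedAddCommGroup H] [InnerProductSpace ℝ H]
    {m l : ℕ} (F : Fin m → H) (c : Fin m → Fin l) (V : Fin l → Submodule ℝ H) : ℝ :=
  ∑ i, Metric.infDist (F i) (V (c i) : Set H) ^ 2

/-- `V ∈ W(c)`. -/
def IsBestBundle {H : Type*} [NormedAddCommGroup H] [InnerProductSpace ℝ H]
    (C : Set (Submodule ℝ H)) {m l : ℕ} (F : Fin m → H)
    (c : Fin m → Fin l) (V : Fin l → Submodule ℝ H) : Prop :=
  (∀ j, V j ∈ C) ∧ ∀ j, ∀ W ∈ C,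
    ∑ i ∈ Finset.univ.filter (fun i => c i = j), Metric.infDist (F i) (V j : Set H) ^ 2 ≤
      ∑ i ∈ Finset.univ.filter (fun i => c i = j), Metric.infDist (F i) (W : Set H) ^ 2

def IsGammaMinimal {H : Type*} [NormedAddCommGroup H] [InnerProductSpace ℝ H]
    (C : Set (Submodule ℝ H)) {m l : ℕ} (F : Fin m → H)
    (c0 : Fin m → Fin l) (V0 : Fin l → Submodule ℝ H) : Prop :=
  IsBestBundle C F c0 V0 ∧
    ∀ (c : Fin m → Fin l) (V : Fin l → Submodule ℝ H),
      IsBestBundle C F c V → Gamma F c0 V0 ≤ Gamma F c V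

/-! Relabel every vector to a nearest subspace of `V₀`: this gives a labeling `c` with
`Γ(c, V₀) = e(F, V₀)`. By MAP the labeling `c` has a best bundle `V`, and since `V₀` is admissible
for each fiber of `c`, `Γ(c, V) ≤ Γ(c, V₀)`. Γ-minimality gives `Γ(c₀, V₀) ≤ Γ(c, V)`, while
`e(F, V₀) ≤ Γ(c₀, V₀)` holds for every labeling. -/

theorem HasMAP.exists_forall_sum_le {H ι : Type*} [NormedAddCommGroup H]
    [InnerProductSpace ℝ H] {C : Set (Submodule ℝ H)} (hMAP : HasMAP C) (F : ι → H)
    (s : Finset ι) :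
    ∃ V ∈ C, ∀ W ∈ C,
      ∑ i ∈ s, infDist (F i) (V : Set H) ^ 2 ≤ ∑ i ∈ s, infDist (F i) (W : Set H) ^ 2 := by
  have totalErr_eq (U : Submodule ℝ H) :
      totalErr (fun k => F (s.equivFin.symm k)) U = ∑ i ∈ s, infDist (F i) (U : Set H) ^ 2 :=
    (s.equivFin.symm.sum_comp fun i => infDist (F i) (U : Set H) ^ 2).trans
      (s.sum_coe_sort fun i => infDist (F i) (U : Set H) ^ 2)
  obtain ⟨V, hVC, hV⟩ := hMAP s.card fun k => F (s.equivFin.symm k)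
  exact ⟨V, hVC, fun W hW => by simpa only [totalErr_eq] using hV W hW⟩

section Bundles

variable {H : Type*} [NormedAddCommGroup H] [InnerProductSpace ℝ H] {C : Set (Submodule ℝ H)}
  {m l : ℕ} (F : Fin m → H)

theorem HasMAP.exists_isBestBundle (hMAP : HasMAP C) (c : Fin m → Fin l) :
    ∃ V, IsBestBundle C F c V := by
  choose V hVC hV using fun j : Fin l => hMAP.exists_forall_sum_le F (univ.filter (c · = j))
  exact ⟨V, hVC, hV⟩

theorem Gamma_eq_sum_fiberwise (c : Fin m → Fin l) (V : Fin l → Submodule ℝ H) :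
    Gamma F c V = ∑ j, ∑ i ∈ univ.filter (c · = j), infDist (F i) (V j : Set H) ^ 2 := by
  rw [Gamma, ← sum_fiberwise univ c]
  refine sum_congr rfl fun j _ => sum_congr rfl fun i hi => ?_
  rw [(mem_filter.mp hi).2]

theorem IsBestBundle.Gamma_le {c : Fin m → Fin l} {V : Fin l → Submodule ℝ H}
    (hV : IsBestBundle C F c V) {U : Fin l → Submodule ℝ H} (hU : ∀ j, U j ∈ C) :
    Gamma F c V ≤ Gamma F c U := by
  rw [Gamma_eq_sum_fiberwise, Gamma_eq_sum_fiberwise]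
  exact sum_le_sum fun j _ => hV.2 j (U j) (hU j)

theorem eBundle_le_Gamma (c : Fin m → Fin l) (V : Fin l → Submodule ℝ H) :
    eBundle F V ≤ Gamma F c V :=
  sum_le_sum fun i _ => ciInf_le (Finite.bddBelow_range _) (c i)

theorem exists_eBundle_eq_Gamma [NeZero l] (V : Fin l → Submodule ℝ H) :
    ∃ c, eBundle F V = Gamma F c V := by
  choose c hc using fun i =>
    exists_eq_ciInf_of_finite (f := fun j : Fin l => infDist (F i) (V j : Set H) ^ 2)
  exact ⟨c, sum_congr rfl fun i _ => (hc i).symm⟩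

end Bundles

theorem eBundle_eq_Gamma_of_isGammaMinimal_general
    {H : Type*} [NormedAddCommGroup H] [InnerProductSpace ℝ H]
    (C : Set (Submodule ℝ H)) (hMAP : HasMAP C)
    {m l : ℕ} (F : Fin m → H) (hl : 1 ≤ l)
    (c0 : Fin m → Fin l) (V0 : Fin l → Submodule ℝ H)
    (hmin : IsGammaMinimal C F c0 V0) :
    eBundle F V0 = Gamma F c0 V0 := by
  have : NeZero l := ⟨by omega⟩
  obtain ⟨c, hc⟩ := exists_eBundle_eq_Gamma F V0
  obtain ⟨V, hV⟩ := hMAP.exists_isBestBundle F c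
  refine le_antisymm (eBundle_le_Gamma F c0 V0) ?_
  calc Gamma F c0 V0 ≤ Gamma F c V := hmin.2 c V hV
    _ ≤ Gamma F c V0 := hV.Gamma_le F hmin.1.1
    _ = eBundle F V0 := hc.symm

/-- If `(c₀, V₀)` is a `Γ`-minimal pair then `e(F, V₀) = Γ(c₀, V₀)`. -/
theorem eBundle_eq_Gamma_of_isGammaMinimal
    {H : Type*} [NormedAddCommGroup H] [InnerProductSpace ℝ H] [CompleteSpace H]
    (C : Set (Submodule ℝ H)) (hC : ∀ V ∈ C, IsClosed (V : Set H))
    (hbot : (⊥ : Submodule ℝ H) ∈ C) (hMAP : HasMAP C)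
    {m l : ℕ} (F : Fin m → H) (hl : 1 ≤ l)
    (c0 : Fin m → Fin l) (V0 : Fin l → Submodule ℝ H)
    (hmin : IsGammaMinimal C F c0 V0) :
    eBundle F V0 = Gamma F c0 V0 :=
  eBundle_eq_Gamma_of_isGammaMinimal_general C hMAP F hl c0 V0 hmin
end

section
/- Let f_1, …, f_m be vectors in ℝ^N, let G be the m×m Gram matrix with entries G_{ij} = ⟨f_i, f_j⟩, and let λ_1 ≥ λ_2 ≥ … ≥ λ_m ≥ 0 be the eigenvalues of G counted with multiplicity. Suppose 1 ≤ n < m and λ_n > λ_{n+1}. Then the optimal subspace of dimension at most n is unique: if V and V' are linear subspaces of ℝ^N with dim V ≤ n and dim V' ≤ n that both minimize Σ_{i=1}^m dist(f_i, ·)² over all subspaces of dimension at most n, then V = V'. -/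
/-!
Let `A` be the matrix with columns `f i`, so that `G = AᵀA`, and let `v k`, `μ k` be an
orthonormal eigenbasis and the eigenvalues of `AAᵀ`; then
`∑ i, ⟪f i, x⟫ ^ 2 = ∑ k, μ k * ⟪v k, x⟫ ^ 2`.
As `AAᵀ` and `AᵀA` share their nonzero eigenvalues, exactly `n` of the `μ k` exceed
`c = λ_{n+1} ≥ 0`; call their index set `K` and let `W` be the span of the `v k`, `k ∈ K`.
Writing `t k = ‖P_U (v k)‖ ^ 2`, the objective at `U` is `∑ ‖f i‖ ^ 2 - ∑ μ k * t k`, and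
`0 ≤ t k ≤ 1`, `∑ t k = dim U ≤ n` give the Ky Fan type bound
`∑ μ k * t k + ∑_{k ∈ K} (μ k - c) * (1 - t k) ≤ ∑_{k ∈ K} μ k`, whose right side is attained
at `W`. At a minimiser `U` the second sum therefore vanishes, so `v k ∈ U` for all `k ∈ K`;
thus `W ≤ U`, and `U = W` by dimension.
-/

open Metric Finset Polynomial
open scoped RealInnerProductSpace Matrix

namespace EckartYoung

section Projection

variable {E : Type*} [NormedAddCommGroup E] [InnerProductSpace ℝ E]

theorem infDist_sq_eq_norm_sq_sub (U : Submodule ℝ E) [U.HasOrthogonalProjection] (x : E) :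
    infDist x U ^ 2 = ‖x‖ ^ 2 - ‖U.starProjection x‖ ^ 2 := by
  have hdist : infDist x U = ‖Uᗮ.starProjection x‖ := by
    rw [Submodule.starProjection_orthogonal_val, Submodule.starProjection_minimal,
      infDist_eq_iInf]
    simp only [dist_eq_norm]
    rfl
  rw [hdist, U.norm_sq_eq_add_norm_sq_starProjection x]
  ring

theorem norm_starProjection_sq_eq_sum {ι : Type*} [Fintype ι] (U : Submodule ℝ E)
    [U.HasOrthogonalProjection] (b : OrthonormalBasis ι ℝ U) (x : E) :
    ‖U.starProjection x‖ ^ 2 = ∑ j, ⟪(b j : E), x⟫ ^ 2 := by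
  rw [U.starProjection_apply, Submodule.norm_coe, ← b.sum_sq_inner_right]
  simp only [Submodule.inner_orthogonalProjectionOnto_eq_of_mem_left]

variable {ι κ : Type*} [Fintype ι] [Fintype κ]

theorem sum_norm_starProjection_sq_eq (U : Submodule ℝ E) [FiniteDimensional ℝ U]
    {f : ι → E} {v : κ → E} {μ : κ → ℝ}
    (hq : ∀ x, ∑ i, ⟪f i, x⟫ ^ 2 = ∑ k, μ k * ⟪v k, x⟫ ^ 2) :
    ∑ i, ‖U.starProjection (f i)‖ ^ 2 = ∑ k, μ k * ‖U.starProjection (v k)‖ ^ 2 := by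
  let b := stdOrthonormalBasis ℝ U
  simp only [norm_starProjection_sq_eq_sum U b, mul_sum]
  rw [sum_comm, sum_comm (γ := κ)]
  simp only [real_inner_comm _ (b _ : E), hq]

theorem sum_infDist_sq_eq [FiniteDimensional ℝ E] {f : ι → E} {v : κ → E} {μ : κ → ℝ}
    (hq : ∀ x, ∑ i, ⟪f i, x⟫ ^ 2 = ∑ k, μ k * ⟪v k, x⟫ ^ 2) (U : Submodule ℝ E) :
    ∑ i, infDist (f i) U ^ 2 = ∑ i, ‖f i‖ ^ 2 - ∑ k, μ k * ‖U.starProjection (v k)‖ ^ 2 := by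
  simp only [infDist_sq_eq_norm_sq_sub, sum_sub_distrib, sum_norm_starProjection_sq_eq U hq]

theorem sum_norm_starProjection_sq_eq_finrank (U : Submodule ℝ E) [FiniteDimensional ℝ U]
    (v : OrthonormalBasis κ ℝ E) :
    ∑ k, ‖U.starProjection (v k)‖ ^ 2 = Module.finrank ℝ U := by
  let b := stdOrthonormalBasis ℝ U
  simp only [norm_starProjection_sq_eq_sum U b]
  rw [sum_comm]
  simp only [v.sum_sq_inner_left, Submodule.norm_coe, b.orthonormal.1]
  simp

theorem norm_starProjection_sq_le_one (U : Submodule ℝ E) [U.HasOrthogonalProjection]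
    (v : OrthonormalBasis κ ℝ E) (k : κ) : ‖U.starProjection (v k)‖ ^ 2 ≤ 1 := by
  simpa [v.orthonormal.1 k] using
    pow_le_pow_left₀ (norm_nonneg _) (U.norm_starProjection_apply_le (v k)) 2

theorem mem_of_norm_starProjection_sq_eq_one (U : Submodule ℝ E) [U.HasOrthogonalProjection]
    (v : OrthonormalBasis κ ℝ E) {k : κ} (h : ‖U.starProjection (v k)‖ ^ 2 = 1) : v k ∈ U := by
  rw [U.mem_iff_norm_starProjection, v.orthonormal.1 k]
  exact (pow_eq_one_iff_of_nonneg (norm_nonneg _) two_ne_zero).1 h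

theorem weight_eq_sum_inner_sq {f : ι → E} {v : OrthonormalBasis κ ℝ E} {μ : κ → ℝ}
    (hq : ∀ x, ∑ i, ⟪f i, x⟫ ^ 2 = ∑ k, μ k * ⟪v k, x⟫ ^ 2) (k : κ) :
    μ k = ∑ i, ⟪f i, v k⟫ ^ 2 := by
  classical
  simp [hq, v.inner_eq_ite]

end Projection

section KyFan

variable {κ : Type*} [Fintype κ]

theorem sum_mul_add_sum_sub_mul_one_sub_le {K : Finset κ} {μ t : κ → ℝ} {c : ℝ} (hc : 0 ≤ c)
    (ht : ∀ k, 0 ≤ t k) (hsum : ∑ k, t k ≤ #K) (hμ : ∀ k ∉ K, μ k ≤ c) :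
    ∑ k, μ k * t k + ∑ k ∈ K, (μ k - c) * (1 - t k) ≤ ∑ k ∈ K, μ k := by
  classical
  have hout : 0 ≤ ∑ k ∈ Kᶜ, (c - μ k) * t k :=
    sum_nonneg fun k hk => mul_nonneg (sub_nonneg.2 (hμ k (mem_compl.1 hk))) (ht k)
  have hcard : 0 ≤ c * (#K - ∑ k, t k) := mul_nonneg hc (sub_nonneg.2 hsum)
  rw [← sum_add_sum_compl K t] at hcard
  rw [← sum_add_sum_compl K]
  simp only [mul_sub, sub_mul, mul_one, sum_sub_distrib, ← mul_sum, sum_const, nsmul_eq_mul] at *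
  linarith

variable {E : Type*} [NormedAddCommGroup E] [InnerProductSpace ℝ E] {v : OrthonormalBasis κ ℝ E}
  {μ : κ → ℝ} {c : ℝ} {K : Finset κ}

theorem sum_mul_norm_starProjection_sq_add_le (hc : 0 ≤ c) (hμ : ∀ k ∉ K, μ k ≤ c)
    (U : Submodule ℝ E) [FiniteDimensional ℝ U] (hU : Module.finrank ℝ U ≤ #K) :
    ∑ k, μ k * ‖U.starProjection (v k)‖ ^ 2 +
      ∑ k ∈ K, (μ k - c) * (1 - ‖U.starProjection (v k)‖ ^ 2) ≤ ∑ k ∈ K, μ k :=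
  sum_mul_add_sum_sub_mul_one_sub_le hc (fun _ => sq_nonneg _)
    (by rw [sum_norm_starProjection_sq_eq_finrank U v]; exact_mod_cast hU) hμ

theorem sum_le_sum_mul_norm_starProjection_span_sq [FiniteDimensional ℝ E] (hμ : ∀ k, 0 ≤ μ k) :
    ∑ k ∈ K, μ k ≤ ∑ k, μ k * ‖(Submodule.span ℝ (v '' K)).starProjection (v k)‖ ^ 2 :=
  calc ∑ k ∈ K, μ k
    _ = ∑ k ∈ K, μ k * ‖(Submodule.span ℝ (v '' K)).starProjection (v k)‖ ^ 2 :=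
      sum_congr rfl fun k hk => by
        have hvk : v k ∈ Submodule.span ℝ (v '' K) :=
          Submodule.subset_span (Set.mem_image_of_mem v hk)
        rw [Submodule.norm_starProjection_apply _ hvk, v.orthonormal.1 k, one_pow, mul_one]
    _ ≤ _ := sum_le_sum_of_subset_of_nonneg (subset_univ K) fun k _ _ =>
      mul_nonneg (hμ k) (sq_nonneg _)

theorem span_le_of_sum_sub_mul_one_sub_nonpos (hK : ∀ k ∈ K, c < μ k) (U : Submodule ℝ E)
    [U.HasOrthogonalProjection]
    (h : ∑ k ∈ K, (μ k - c) * (1 - ‖U.starProjection (v k)‖ ^ 2) ≤ 0) :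
    Submodule.span ℝ (v '' K) ≤ U := by
  have hterm : ∀ k ∈ K, 0 ≤ (μ k - c) * (1 - ‖U.starProjection (v k)‖ ^ 2) := fun k hk =>
    mul_nonneg (sub_nonneg.2 (hK k hk).le) (sub_nonneg.2 (norm_starProjection_sq_le_one U v k))
  have hzero := (sum_eq_zero_iff_of_nonneg hterm).1 (h.antisymm (sum_nonneg hterm))
  rw [Submodule.span_le]
  rintro _ ⟨k, hk, rfl⟩
  have h1 := (mul_eq_zero.1 (hzero k hk)).resolve_left (sub_ne_zero.2 (hK k hk).ne')
  exact mem_of_norm_starProjection_sq_eq_one U v (by linarith)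

theorem eq_span_of_forall_sum_infDist_sq_le [FiniteDimensional ℝ E] {ι : Type*} [Fintype ι]
    {f : ι → E} (hq : ∀ x, ∑ i, ⟪f i, x⟫ ^ 2 = ∑ k, μ k * ⟪v k, x⟫ ^ 2) (hc : 0 ≤ c)
    (hK : ∀ k, k ∈ K ↔ c < μ k) {n : ℕ} (hKn : #K = n) {U : Submodule ℝ E}
    (hU : Module.finrank ℝ U ≤ n)
    (hmin : ∀ U' : Submodule ℝ E, Module.finrank ℝ U' ≤ n →
      ∑ i, infDist (f i) U ^ 2 ≤ ∑ i, infDist (f i) U' ^ 2) :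
    U = Submodule.span ℝ (v '' K) := by
  subst hKn
  have hW : Module.finrank ℝ (Submodule.span ℝ (v '' K)) = #K := by
    rw [Set.image_eq_range, ← Fintype.card_coe K]
    exact finrank_span_eq_card (v.orthonormal.linearIndependent.comp _ Subtype.val_injective)
  have hμ : ∀ k, 0 ≤ μ k := fun k => by
    rw [weight_eq_sum_inner_sq hq k]
    positivity
  have hUW := hmin _ hW.le
  rw [sum_infDist_sq_eq hq, sum_infDist_sq_eq hq] at hUW
  have hbound := sum_mul_norm_starProjection_sq_add_le (v := v) hc
    (fun k hk => not_lt.1 (mt (hK k).2 hk)) U hU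
  have hWU := span_le_of_sum_sub_mul_one_sub_nonpos (fun k hk => (hK k).1 hk) U
    (by linarith [sum_le_sum_mul_norm_starProjection_span_sq (v := v) (K := K) hμ])
  exact (Submodule.eq_of_le_of_finrank_le hWU (hU.trans hW.ge)).symm

end KyFan

section Matrix

theorem inner_apply_self_eq_sum {E κ : Type*} [NormedAddCommGroup E] [InnerProductSpace ℝ E]
    [Fintype κ] {T : E →ₗ[ℝ] E} (hT : T.IsSymmetric) (b : OrthonormalBasis κ ℝ E) {μ : κ → ℝ}
    (hb : ∀ k, T (b k) = μ k • b k) (x : E) :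
    ⟪T x, x⟫ = ∑ k, μ k * ⟪b k, x⟫ ^ 2 := by
  rw [← b.sum_inner_mul_inner (T x) x]
  refine sum_congr rfl fun k _ => ?_
  rw [hT, hb, real_inner_smul_right, real_inner_comm x]
  ring

variable {n : Type*} [Fintype n] [DecidableEq n]

theorem IsHermitian.inner_toEuclideanLin_self {S : Matrix n n ℝ} (hS : S.IsHermitian)
    (x : EuclideanSpace ℝ n) :
    ⟪S.toEuclideanLin x, x⟫ = ∑ k, hS.eigenvalues k * ⟪hS.eigenvectorBasis k, x⟫ ^ 2 :=
  inner_apply_self_eq_sum (Matrix.isSymmetric_toEuclideanLin_iff.2 hS) _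
    (fun k => by ext a; simp [Matrix.toLpLin_apply, hS.mulVec_eigenvectorBasis k]) x

variable {ι : Type*} [Fintype ι]

def colMatrix (f : ι → EuclideanSpace ℝ n) : Matrix n ι ℝ := Matrix.of fun a i => f i a

omit [DecidableEq n] [Fintype ι] in
theorem gram_eq_conjTranspose_colMatrix_mul (f : ι → EuclideanSpace ℝ n) :
    Matrix.gram ℝ f = (colMatrix f)ᴴ * colMatrix f := by
  simpa [colMatrix] using Matrix.gram_eq_conjTranspose_mul (EuclideanSpace.basisFun n ℝ) f

theorem inner_toEuclideanLin_colMatrix_mul_self (f : ι → EuclideanSpace ℝ n)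
    (x : EuclideanSpace ℝ n) :
    ⟪(colMatrix f * (colMatrix f)ᴴ).toEuclideanLin x, x⟫ = ∑ i, ⟪f i, x⟫ ^ 2 := by
  simp only [colMatrix, Matrix.conjTranspose_eq_transpose_of_trivial, Matrix.toLpLin_apply,
    PiLp.inner_apply, Matrix.mulVec, dotProduct, Matrix.mul_apply, Matrix.of_apply,
    Matrix.transpose_apply, sum_mul, RCLike.inner_apply, map_sum, Real.ringHom_apply, mul_sum, sq]
  simp only [sum_comm (α := ι)]
  exact sum_congr rfl fun i _ => sum_congr rfl fun a _ => sum_congr rfl fun b _ => by ring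

end Matrix

section Eigenvalues

variable {R : Type*} [CommRing R] [IsDomain R] {ι : Type*} [Fintype ι]

theorem roots_X_pow_mul_prod_X_sub_C (a : ℕ) (μ : ι → R) :
    (X ^ a * ∏ i, (X - C (μ i))).roots = a • {0} + univ.val.map μ := by
  rw [roots_mul ((monic_X_pow a).mul
      (monic_prod_of_monic _ _ fun i _ => monic_X_sub_C (μ i))).ne_zero,
    roots_X_pow, prod_eq_multiset_prod]
  simpa [Multiset.map_map, Function.comp_def] using roots_multiset_prod_X_sub_C (univ.val.map μ)

theorem card_filter_lt_eq_of_X_pow_mul_prod_eq [LinearOrder R] {κ : Type*} [Fintype κ]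
    {μ : ι → R} {ν : κ → R} {a b : ℕ}
    (h : X ^ a * ∏ i, (X - C (μ i)) = X ^ b * ∏ j, (X - C (ν j))) {c : R} (hc : 0 ≤ c) :
    #{i | c < μ i} = #{j | c < ν j} := by
  have hcount := congr(Multiset.countP (c < ·) ($h).roots)
  simp only [roots_X_pow_mul_prod_X_sub_C, Multiset.countP_add, Multiset.countP_nsmul,
    Multiset.countP_map] at hcount
  have h0 : Multiset.countP (c < ·) {(0 : R)} = 0 :=
    Multiset.countP_eq_zero.2 fun x hx => by simpa [Multiset.mem_singleton.1 hx] using hc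
  simpa [h0, Finset.card_def] using hcount

theorem card_filter_lt_of_antitone {α : Type*} [LinearOrder α] {m n : ℕ} {lam : Fin m → α}
    (hlam : Antitone lam) (hnm : n < m) (hgap : lam ⟨n, hnm⟩ < lam ⟨n - 1, by omega⟩) :
    #{i | lam ⟨n, hnm⟩ < lam i} = n := by
  have hfilter :
      filter (fun i => lam ⟨n, hnm⟩ < lam i) univ = filter (fun i : Fin m => i < n) univ := by
    ext i
    simp only [mem_filter, mem_univ, true_and]
    refine ⟨fun h => ?_, fun h => hgap.trans_le (hlam (Fin.le_def.2 (by simp; omega)))⟩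
    by_contra hi
    exact h.not_ge (hlam (Fin.le_def.2 (by simp; omega)))
  rw [hfilter, Fin.card_filter_val_lt, min_eq_right hnm.le]

end Eigenvalues

end EckartYoung

open EckartYoung

/-- Uniqueness of the optimal subspace of dimension at most `n` when there is a gap
between the `n`-th and `(n+1)`-st eigenvalues of the Gram matrix. -/
theorem eckart_young_unique {N m : ℕ} (f : Fin m → EuclideanSpace ℝ (Fin N))
    (G : Matrix (Fin m) (Fin m) ℝ) (hG : ∀ i j, G i j = inner ℝ (f i) (f j))
    (lam : Fin m → ℝ)
    (hdec : ∀ i j : Fin m, i ≤ j → lam j ≤ lam i)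
    (hnonneg : ∀ i, 0 ≤ lam i)
    (hchar : G.charpoly = ∏ i, (Polynomial.X - Polynomial.C (lam i)))
    (n : ℕ) (hn : 1 ≤ n) (hnm : n < m)
    (hgap : lam ⟨n, hnm⟩ < lam ⟨n - 1, by omega⟩) :
    ∀ V V' : Submodule ℝ (EuclideanSpace ℝ (Fin N)),
      Module.finrank ℝ V ≤ n → Module.finrank ℝ V' ≤ n →
      (∀ U : Submodule ℝ (EuclideanSpace ℝ (Fin N)), Module.finrank ℝ U ≤ n →
        (∑ i, Metric.infDist (f i) (V : Set (EuclideanSpace ℝ (Fin N))) ^ 2) ≤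
          ∑ i, Metric.infDist (f i) (U : Set (EuclideanSpace ℝ (Fin N))) ^ 2) →
      (∀ U : Submodule ℝ (EuclideanSpace ℝ (Fin N)), Module.finrank ℝ U ≤ n →
        (∑ i, Metric.infDist (f i) (V' : Set (EuclideanSpace ℝ (Fin N))) ^ 2) ≤
          ∑ i, Metric.infDist (f i) (U : Set (EuclideanSpace ℝ (Fin N))) ^ 2) →
      V = V' := by
  intro V V' hV hV' hmin hmin'
  set A := colMatrix f
  have hS : (A * Aᴴ).IsHermitian := Matrix.isHermitian_mul_conjTranspose_self A
  have hq : ∀ x, ∑ i, ⟪f i, x⟫ ^ 2 = ∑ k, hS.eigenvalues k * ⟪hS.eigenvectorBasis k, x⟫ ^ 2 :=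
    fun x => (inner_toEuclideanLin_colMatrix_mul_self f x).symm.trans
      (IsHermitian.inner_toEuclideanLin_self hS x)
  have hGA : G = Aᴴ * A := by
    rw [← gram_eq_conjTranspose_colMatrix_mul]
    ext i j
    exact hG i j
  have hpoly : X ^ m * ∏ k, (X - C (hS.eigenvalues k)) = X ^ N * ∏ i, (X - C (lam i)) := by
    have h := Matrix.charpoly_mul_comm' A Aᴴ
    rw [hS.charpoly_eq, ← hGA, hchar] at h
    simpa using h
  set c := lam ⟨n, hnm⟩
  have hKn : #{k | c < hS.eigenvalues k} = n := by
    rw [card_filter_lt_eq_of_X_pow_mul_prod_eq hpoly (hnonneg _),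
      card_filter_lt_of_antitone hdec hnm hgap]
  have hK : ∀ k, k ∈ ({k | c < hS.eigenvalues k} : Finset _) ↔ c < hS.eigenvalues k := by simp
  rw [eq_span_of_forall_sum_infDist_sq_le hq (hnonneg _) hK hKn hV hmin,
    eq_span_of_forall_sum_infDist_sq_le hq (hnonneg _) hK hKn hV' hmin']
end

section
/- Let f_1, …, f_m be vectors in ℝ^N and let l, n ≥ 1. Then there exists a bundle V_0 = (V_1^0, …, V_l^0) of linear subspaces of ℝ^N with dim V_j^0 ≤ n for all j, such that Σ_{i=1}^m min_{1≤j≤l} dist(f_i, V_j^0)² ≤ Σ_{i=1}^m min_{1≤j≤l} dist(f_i, V_j)² for every l-tuple (V_1, …, V_l) of linear subspaces of ℝ^N with dim V_j ≤ n for all j. -/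
/-!
Parametrize a subspace by its orthogonal projection `P`: then `dist(x, range P) = ‖x - P x‖`,
and the subspaces of dimension at most `n` correspond to the self-adjoint idempotents of trace
at most `n`, a closed and bounded, hence compact, set of operators on a finite-dimensional space.
The cost is continuous in the projections, so it attains its minimum on the `l`-fold product of
this set.
-/

open Metric Finset

section InnerProductSpace

variable {𝕜 E : Type*} [RCLike 𝕜] [NormedAddCommGroup E] [InnerProductSpace 𝕜 E]

theorem Submodule.infDist_eq_norm_sub_starProjection (K : Submodule 𝕜 E)
    [K.HasOrthogonalProjection] (x : E) :
    infDist x K = ‖x - K.starProjection x‖ := by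
  rw [K.starProjection_minimal, infDist_eq_iInf]
  simp [dist_eq_norm]

theorem IsStarProjection.infDist_range_eq_norm_sub [CompleteSpace E] {P : E →L[𝕜] E}
    (hP : IsStarProjection P) (x : E) : infDist x P.range = ‖x - P x‖ := by
  obtain ⟨_, hP⟩ := isStarProjection_iff_eq_starProjection_range.mp hP
  nth_rw 2 [hP]
  exact Submodule.infDist_eq_norm_sub_starProjection _ x

end InnerProductSpace

theorem ContinuousLinearMap.trace_eq_finrank_range_of_isIdempotentElem {𝕜 E : Type*} [Field 𝕜]
    [TopologicalSpace E] [AddCommGroup E] [Module 𝕜 E] [FiniteDimensional 𝕜 E]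
    {P : E →L[𝕜] E} (hP : IsIdempotentElem P) :
    LinearMap.trace 𝕜 E P = Module.finrank 𝕜 P.range :=
  (LinearMap.IsIdempotentElem.isProj_range _ (congrArg ContinuousLinearMap.toLinearMap hP.eq)).trace

theorem isCompact_setOf_isStarProjection_trace_le {E : Type*} [NormedAddCommGroup E]
    [InnerProductSpace ℝ E] [FiniteDimensional ℝ E] (n : ℕ) :
    IsCompact {P : E →L[ℝ] E | IsStarProjection P ∧ LinearMap.trace ℝ E P ≤ n} := by
  refine isCompact_of_isClosed_isBounded ?_ ?_
  · have htrace : Continuous fun P : E →L[ℝ] E => LinearMap.trace ℝ E P :=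
      LinearMap.continuous_of_finiteDimensional
        ((LinearMap.trace ℝ E).comp (ContinuousLinearMap.coeLM ℝ))
    simp only [isStarProjection_iff, IsIdempotentElem, IsSelfAdjoint, Set.ofPred_and]
    exact ((isClosed_eq (continuous_id.mul continuous_id) continuous_id).inter
      (isClosed_eq continuous_star continuous_id)).inter (isClosed_le htrace continuous_const)
  · exact isBounded_iff_forall_norm_le.mpr ⟨1, fun P hP => hP.1.norm_le⟩

section Bundle

variable {E ι κ : Type*} [NormedAddCommGroup E] [InnerProductSpace ℝ E] [Fintype ι]

noncomputable def bundleCost (f : ι → E) (V : κ → Submodule ℝ E) : ℝ :=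
  ∑ i, ⨅ j, infDist (f i) (V j) ^ 2

noncomputable def projectionCost (f : ι → E) (P : κ → E →L[ℝ] E) : ℝ :=
  ∑ i, ⨅ j, ‖f i - P j (f i)‖ ^ 2

theorem continuous_projectionCost [Fintype κ] [Nonempty κ] (f : ι → E) :
    Continuous (projectionCost (κ := κ) f) := by
  refine continuous_finsetSum _ fun i _ => ?_
  simp only [← Finset.inf'_univ_eq_ciInf]
  exact Continuous.finset_inf'_apply univ_nonempty fun j _ => by fun_prop

theorem bundleCost_range_eq_projectionCost [CompleteSpace E] (f : ι → E)
    {P : κ → E →L[ℝ] E} (hP : ∀ j, IsStarProjection (P j)) :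
    bundleCost f (fun j => (P j).range) = projectionCost f P := by
  simp only [bundleCost, projectionCost, fun i j => (hP j).infDist_range_eq_norm_sub (f i)]

theorem exists_isMinOn_bundleCost [FiniteDimensional ℝ E] [Fintype κ] [Nonempty κ]
    (f : ι → E) (n : ℕ) :
    ∃ V₀ ∈ {V : κ → Submodule ℝ E | ∀ j, Module.finrank ℝ (V j) ≤ n},
      IsMinOn (bundleCost f) {V | ∀ j, Module.finrank ℝ (V j) ≤ n} V₀ := by
  set S := Set.univ.pi fun _ : κ =>
    {P : E →L[ℝ] E | IsStarProjection P ∧ LinearMap.trace ℝ E P ≤ n}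
  have hS : IsCompact S := isCompact_univ_pi fun _ => isCompact_setOf_isStarProjection_trace_le n
  have hS₀ : (fun _ => 0) ∈ S := fun _ _ => ⟨IsStarProjection.zero _, by simp⟩
  obtain ⟨P₀, hP₀, hmin⟩ :=
    hS.exists_isMinOn ⟨_, hS₀⟩ (continuous_projectionCost f).continuousOn
  have hP₀ (j : κ) := hP₀ j (Set.mem_univ j)
  refine ⟨fun j => (P₀ j).range, fun j => ?_, fun V hV => ?_⟩
  · have htrace := (hP₀ j).2
    rw [ContinuousLinearMap.trace_eq_finrank_range_of_isIdempotentElem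
      (hP₀ j).1.isIdempotentElem] at htrace
    exact_mod_cast htrace
  · have hQ : (fun j => (V j).starProjection) ∈ S := fun j _ => by
      refine ⟨isStarProjection_starProjection, ?_⟩
      rw [ContinuousLinearMap.trace_eq_finrank_range_of_isIdempotentElem
        (V j).isIdempotentElem_starProjection, Submodule.range_starProjection]
      exact_mod_cast hV j
    have hV' : bundleCost f V = projectionCost f fun j => (V j).starProjection := by
      simpa only [Submodule.range_starProjection] using
        bundleCost_range_eq_projectionCost f fun j => isStarProjection_starProjection (U := V j)
    rw [Set.mem_ofPred_eq, bundleCost_range_eq_projectionCost f fun j => (hP₀ j).1, hV']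
    exact hmin hQ

end Bundle

theorem exists_optimal_bundle_rn_general {N m : ℕ} (f : Fin m → EuclideanSpace ℝ (Fin N))
    (l n : ℕ) (hl : 1 ≤ l) :
    ∃ V0 : Fin l → Submodule ℝ (EuclideanSpace ℝ (Fin N)),
      (∀ j, Module.finrank ℝ (V0 j) ≤ n) ∧
      ∀ V : Fin l → Submodule ℝ (EuclideanSpace ℝ (Fin N)),
        (∀ j, Module.finrank ℝ (V j) ≤ n) →
        (∑ i, ⨅ j, Metric.infDist (f i) (V0 j : Set (EuclideanSpace ℝ (Fin N))) ^ 2) ≤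
          ∑ i, ⨅ j, Metric.infDist (f i) (V j : Set (EuclideanSpace ℝ (Fin N))) ^ 2 := by
  have : Nonempty (Fin l) := ⟨⟨0, hl⟩⟩
  obtain ⟨V₀, hV₀, hmin⟩ := exists_isMinOn_bundleCost (κ := Fin l) f n
  exact ⟨V₀, hV₀, fun V hV => hmin hV⟩

/-- Existence of an optimal bundle of at most `l` subspaces of `ℝ^N`, each of dimension
at most `n`, minimizing the sum of the squared distances of the data to the closest
subspace of the bundle. -/
theorem exists_optimal_bundle_rn {N m : ℕ} (f : Fin m → EuclideanSpace ℝ (Fin N))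
    (l n : ℕ) (hl : 1 ≤ l) (hn : 1 ≤ n) :
    ∃ V0 : Fin l → Submodule ℝ (EuclideanSpace ℝ (Fin N)),
      (∀ j, Module.finrank ℝ (V0 j) ≤ n) ∧
      ∀ V : Fin l → Submodule ℝ (EuclideanSpace ℝ (Fin N)),
        (∀ j, Module.finrank ℝ (V j) ≤ n) →
        (∑ i, ⨅ j, Metric.infDist (f i) (V0 j : Set (EuclideanSpace ℝ (Fin N))) ^ 2) ≤
          ∑ i, ⨅ j, Metric.infDist (f i) (V j : Set (EuclideanSpace ℝ (Fin N))) ^ 2 :=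
  exists_optimal_bundle_rn_general f l n hl
end

section
/- Let f_1, …, f_m be vectors in ℝ^N, let l, n ≥ 1, and let ε ≥ 0. If the family F = (f_1, …, f_m) is (l, n, ε)-sparse, then there exist vectors d_1, …, d_s in ℝ^N with s ≤ l · n and coefficient vectors x_1, …, x_m ∈ ℝ^s, each having at most n nonzero entries, such that Σ_{i=1}^m ‖f_i − Σ_{k=1}^s x_{i,k} d_k‖² ≤ ε. -/
open Metric Finset

/-- The family `f = (f_1, …, f_m)` in `ℝ^N` is `(l, n, ε)`-sparse: there are `l`
subspaces of dimension at most `n` such that the sum of the squared distances of the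
data to the closest subspace is at most `ε`. -/
def IsSparse {N m : ℕ} (l n : ℕ) (ε : ℝ) (f : Fin m → EuclideanSpace ℝ (Fin N)) : Prop :=
  ∃ V : Fin l → Submodule ℝ (EuclideanSpace ℝ (Fin N)),
    (∀ j, Module.finrank ℝ (V j) ≤ n) ∧
    (∑ i, ⨅ j, Metric.infDist (f i) (V j : Set (EuclideanSpace ℝ (Fin N))) ^ 2) ≤ ε

/-!
Assign each `f i` to a nearest subspace `V (j i)` and replace it by its orthogonal projection
onto that subspace, which realizes the distance. Expanding the projection in a basis of
`V (j i)` (at most `n` vectors) and concatenating the bases of all the `V j` gives a dictionary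
of at most `l * n` atoms in which each `f i` only uses the atoms of its own block.
-/

theorem Submodule.norm_sub_starProjection_eq_infDist {𝕜 E : Type*} [RCLike 𝕜]
    [NormedAddCommGroup E] [InnerProductSpace 𝕜 E] (U : Submodule 𝕜 E)
    [U.HasOrthogonalProjection] (y : E) :
    ‖y - U.starProjection y‖ = infDist y U := by
  simp_rw [starProjection_minimal, infDist_eq_iInf, dist_eq_norm]
  rfl

section SparseApprox

variable {E : Type*} [NormedAddCommGroup E] [NormedSpace ℝ E] {α ι κ : Type*}
  [Fintype α] [Fintype ι] [Fintype κ]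

def IsSparseApprox (f : α → E) (d : ι → E) (n : ℕ) (ε : ℝ) : Prop :=
  ∃ x : α → ι → ℝ, (∀ i, #{k | x i k ≠ 0} ≤ n) ∧ ∑ i, ‖f i - ∑ k, x i k • d k‖ ^ 2 ≤ ε

theorem IsSparseApprox.comp_equiv {f : α → E} {d : ι → E} {n : ℕ} {ε : ℝ}
    (h : IsSparseApprox f d n ε) (e : κ ≃ ι) : IsSparseApprox f (d ∘ e) n ε := by
  obtain ⟨x, hx, herr⟩ := h
  refine ⟨fun i => x i ∘ e, fun i => (card_equiv e (by simp)).trans_le (hx i), ?_⟩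
  convert herr using 5 with i
  exact e.sum_comp fun k => x i k • d k

theorem isSparseApprox_sigma [DecidableEq ι] {β : ι → Type*} [∀ j, Fintype (β j)]
    (b : ∀ j, β j → E) {n : ℕ} (hcard : ∀ j, Fintype.card (β j) ≤ n) {ε : ℝ} (f : α → E)
    (j : α → ι) (c : ∀ i, β (j i) → ℝ)
    (herr : ∑ i, ‖f i - ∑ k, c i k • b (j i) k‖ ^ 2 ≤ ε) :
    IsSparseApprox f (fun p : Σ j, β j => b p.1 p.2) n ε := by
  let x : α → (Σ j, β j) → ℝ := fun i p =>
    Pi.single (M := fun j => β j → ℝ) (j i) (c i) p.1 p.2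
  have hsum : ∀ i, ∑ p, x i p • b p.1 p.2 = ∑ k, c i k • b (j i) k := by
    intro i
    rw [Fintype.sum_sigma, Finset.sum_eq_single (j i)]
    · simp [x]
    · intro j' _ hj'
      simp [x, Pi.single_eq_of_ne hj']
    · simp
  have hsupp : ∀ i, #{p | x i p ≠ 0} ≤ n := by
    intro i
    have hsub : ({p | x i p ≠ 0} : Finset _) ⊆ univ.map (.sigmaMk (j i)) := by
      rintro ⟨j', k⟩ hp
      obtain rfl : j' = j i := by
        by_contra hj'
        simp [x, Pi.single_eq_of_ne hj'] at hp
      exact mem_map_of_mem _ (mem_univ k)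
    exact (card_le_card hsub).trans ((card_map _).trans_le (hcard (j i)))
  exact ⟨x, hsupp, by simpa only [hsum] using herr⟩

end SparseApprox

theorem approx_dictionary_of_sparse_general {N m : ℕ} (f : Fin m → EuclideanSpace ℝ (Fin N))
    (l n : ℕ) (hl : 1 ≤ l) (ε : ℝ)
    (hsp : IsSparse l n ε f) :
    ∃ (s : ℕ), s ≤ l * n ∧
      ∃ (d : Fin s → EuclideanSpace ℝ (Fin N)) (x : Fin m → Fin s → ℝ),
        (∀ i, (Finset.univ.filter (fun k => x i k ≠ 0)).card ≤ n) ∧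
        (∑ i, ‖f i - ∑ k, x i k • d k‖ ^ 2) ≤ ε := by
  obtain ⟨V, hdim, hdist⟩ := hsp
  have : Nonempty (Fin l) := ⟨⟨0, hl⟩⟩
  choose j hj using fun i => exists_eq_ciInf_of_finite
    (f := fun j => infDist (f i) (V j : Set (EuclideanSpace ℝ (Fin N))) ^ 2)
  let b j := Module.finBasis ℝ (V j)
  have hproj : ∀ i, ∑ k, (b (j i)).repr ((V (j i)).orthogonalProjectionOnto (f i)) k •
      (b (j i) k : EuclideanSpace ℝ (Fin N)) = (V (j i)).starProjection (f i) := fun i => by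
    simpa only [Submodule.coe_sum, Submodule.coe_smul, Submodule.starProjection_apply] using
      congrArg Subtype.val ((b (j i)).sum_repr ((V (j i)).orthogonalProjectionOnto (f i)))
  have hblock := isSparseApprox_sigma (fun j k => (b j k : EuclideanSpace ℝ (Fin N)))
    (fun j => (Fintype.card_fin _).trans_le (hdim j)) f j
    (fun i => (b (j i)).repr ((V (j i)).orthogonalProjectionOnto (f i)))
    (by simpa only [hproj, Submodule.norm_sub_starProjection_eq_infDist, hj] using hdist)
  obtain ⟨x, hx, herr⟩ := hblock.comp_equiv (Fintype.equivFin _).symm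
  refine ⟨_, ?_, _, x, hx, herr⟩
  calc Fintype.card (Σ j, Fin (Module.finrank ℝ (V j))) = ∑ j, Module.finrank ℝ (V j) := by simp
    _ ≤ ∑ _j : Fin l, n := sum_le_sum fun j _ => hdim j
    _ = l * n := by simp

/-- An `(l, n, ε)`-sparse family admits a dictionary of at most `l·n` atoms and `n`-sparse
coefficient vectors approximating the data with total squared error at most `ε`. -/
theorem approx_dictionary_of_sparse {N m : ℕ} (f : Fin m → EuclideanSpace ℝ (Fin N))
    (l n : ℕ) (hl : 1 ≤ l) (hn : 1 ≤ n) (ε : ℝ) (hε : 0 ≤ ε)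
    (hsp : IsSparse l n ε f) :
    ∃ (s : ℕ), s ≤ l * n ∧
      ∃ (d : Fin s → EuclideanSpace ℝ (Fin N)) (x : Fin m → Fin s → ℝ),
        (∀ i, (Finset.univ.filter (fun k => x i k ≠ 0)).card ≤ n) ∧
        (∑ i, ‖f i - ∑ k, x i k • d k‖ ^ 2) ≤ ε :=
  approx_dictionary_of_sparse_general f l n hl ε hsp
end
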